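/- The convolution of the biased riffle shuffle measures P_{n,a,p} and P_{n,b,p'} on S_n equals P_{n,ab, p⊗p'}, where p⊗p' = (p_1p'_1, ..., p_1p'_b, p_2p'_1, ..., p_a p'_b). -/

import Mathlib

open Finset

/-- Stable sorting by a lexicographic key factors: first sort by the minor key, then
stably sort by the major key. -/
lemma sort_lex_factor {n : ℕ} {α β : Type*} [LinearOrder α] [LinearOrder β]
    (h : Fin n → Lex (α × β)) :
    Tuple.sort h =
      Tuple.sort (fun i => (ofLex (h i)).2) *
        Tuple.sort ((fun i => (ofLex (h i)).1) ∘ ⇑(Tuple.sort (fun i => (ofLex (h i)).2))) := by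
  set h₁ : Fin n → α := fun i => (ofLex (h i)).1 with hh₁
  set h₂ : Fin n → β := fun i => (ofLex (h i)).2 with hh₂
  set ρ : Equiv.Perm (Fin n) := Tuple.sort h₂ with hρ
  set σ : Equiv.Perm (Fin n) := Tuple.sort (h₁ ∘ ⇑ρ) with hσ
  obtain ⟨mρ, sρ⟩ := Tuple.eq_sort_iff.mp hρ
  obtain ⟨mσ, sσ⟩ := Tuple.eq_sort_iff.mp hσ
  symm
  rw [Tuple.eq_sort_iff]
  constructor
  · intro i j hij
    rcases eq_or_lt_of_le hij with rfl | hij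
    · exact le_rfl
    have h1 : h₁ ((ρ * σ) i) ≤ h₁ ((ρ * σ) j) := mσ hij.le
    simp only [Equiv.Perm.coe_mul, Function.comp_apply] at h1 ⊢
    have : h (ρ (σ i)) = toLex (h₁ (ρ (σ i)), h₂ (ρ (σ i))) := rfl
    rw [this, show h (ρ (σ j)) = toLex (h₁ (ρ (σ j)), h₂ (ρ (σ j))) from rfl,
      Prod.Lex.le_iff]
    rcases lt_or_eq_of_le h1 with hlt | heq
    · exact Or.inl hlt
    · refine Or.inr ⟨heq, ?_⟩
      have hσij : σ i < σ j := sσ i j hij heq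
      exact mρ hσij.le
  · intro i j hij hfe
    simp only [Equiv.Perm.coe_mul, Function.comp_apply] at hfe ⊢
    have h1 : h₁ (ρ (σ i)) = h₁ (ρ (σ j)) := by
      simp only [hh₁]; rw [hfe]
    have h2 : h₂ (ρ (σ i)) = h₂ (ρ (σ j)) := by
      simp only [hh₂]; rw [hfe]
    have hσij : σ i < σ j := sσ i j hij h1
    exact sρ (σ i) (σ j) hσij h2


/-- The biased riffle shuffle measure on `S_n` for a probability vector `p` indexed by
a linearly ordered alphabet `α`, via the inverse description: each card is independently
assigned a letter (letter `c` with probability `p c`), the cards are stably sorted by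
letter (`Tuple.sort`), and the shuffle is the inverse of the resulting rearrangement. -/
noncomputable def shuffleP (n : ℕ) {α : Type*} [Fintype α] [LinearOrder α]
    (p : α → ℝ) (π : Equiv.Perm (Fin n)) : ℝ :=
  ∑ f ∈ Finset.univ.filter (fun f : Fin n → α => (Tuple.sort f)⁻¹ = π), ∏ i, p (f i)

theorem stmt8 (n a b : ℕ) (p : Fin a → ℝ) (p' : Fin b → ℝ)
    (hp : ∀ i, 0 ≤ p i) (hp' : ∀ j, 0 ≤ p' j)
    (hs : ∑ i, p i = 1) (hs' : ∑ j, p' j = 1) (π : Equiv.Perm (Fin n)) :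
    ∑ σ : Equiv.Perm (Fin n), shuffleP n p σ * shuffleP n p' (σ⁻¹ * π) =
      shuffleP n (α := Lex (Fin a × Fin b))
        (fun s => p (ofLex s).1 * p' (ofLex s).2) π := by
  classical
  -- Step 1: collapse the sum over σ.
  have step1 : ∑ σ : Equiv.Perm (Fin n), shuffleP n p σ * shuffleP n p' (σ⁻¹ * π) =
      ∑ f : Fin n → Fin a, (∏ i, p (f i)) * shuffleP n p' (Tuple.sort f * π) := by
    rw [← Finset.sum_fiberwise_of_maps_to
      (g := fun f : Fin n → Fin a => (Tuple.sort f)⁻¹) (fun f _ => Finset.mem_univ _)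
      (fun f => (∏ i, p (f i)) * shuffleP n p' (Tuple.sort f * π))]
    refine Finset.sum_congr rfl fun σ _ => ?_
    rw [shuffleP, Finset.sum_mul]
    refine Finset.sum_congr rfl fun f hf => ?_
    rw [Finset.mem_filter] at hf
    rw [← hf.2, inv_inv]
  rw [step1]
  -- Step 2: rewrite as an iterated sum.
  have step2 : ∀ f : Fin n → Fin a,
      (∏ i, p (f i)) * shuffleP n p' (Tuple.sort f * π) =
      ∑ g ∈ Finset.univ.filter
          (fun g : Fin n → Fin b => (Tuple.sort g)⁻¹ = Tuple.sort f * π),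
        (∏ i, p (f i)) * ∏ i, p' (g i) := by
    intro f
    rw [shuffleP, Finset.mul_sum]
  simp only [step2]
  rw [Finset.sum_sigma']
  rw [shuffleP]
  -- Step 3: bijection between pairs (f, g) and lex-valued functions h.
  refine Finset.sum_nbij'
    (i := fun fg : Σ _ : Fin n → Fin a, Fin n → Fin b =>
      fun k => toLex (fg.1 ((Tuple.sort fg.2)⁻¹ k), fg.2 k))
    (j := fun h : Fin n → Lex (Fin a × Fin b) =>
      ⟨fun k => (ofLex (h ((Tuple.sort fun i => (ofLex (h i)).2) k))).1,
        fun k => (ofLex (h k)).2⟩) ?_ ?_ ?_ ?_ ?_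
  · rintro ⟨f, g⟩ hfg
    simp only [Finset.mem_sigma, Finset.mem_filter, Finset.mem_univ, true_and] at hfg ⊢
    set h : Fin n → Lex (Fin a × Fin b) := fun k => toLex (f ((Tuple.sort g)⁻¹ k), g k) with hh
    have key := sort_lex_factor h
    have e1 : (fun i => (ofLex (h i)).2) = g := rfl
    have e2 : ((fun i => (ofLex (h i)).1) ∘ ⇑(Tuple.sort g)) = f := by
      funext k
      simp [hh]
    rw [e1] at key
    rw [e2] at key
    rw [key, mul_inv_rev, hfg, ← mul_assoc, inv_mul_cancel, one_mul]
  · intro h hh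
    simp only [Finset.mem_filter, Finset.mem_univ, true_and] at hh
    simp only [Finset.mem_sigma, Finset.mem_filter, Finset.mem_univ, true_and]
    have key := sort_lex_factor h
    rw [key, mul_inv_rev] at hh
    have ec : (fun k => (ofLex (h ((Tuple.sort fun i => (ofLex (h i)).2) k))).1) =
        ((fun i => (ofLex (h i)).1) ∘ ⇑(Tuple.sort fun i => (ofLex (h i)).2)) := rfl
    rw [← hh, ← mul_assoc, ec, mul_inv_cancel, one_mul]
  · rintro ⟨f, g⟩ hfg
    refine Sigma.ext ?_ (heq_of_eq ?_)
    · funext k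
      simp
    · funext k
      simp
  · intro h hh
    funext k
    simp only [ofLex_toLex]
    rw [Equiv.Perm.coe_inv, Equiv.apply_symm_apply]
    rfl
  · rintro ⟨f, g⟩ hfg
    simp only [ofLex_toLex]
    rw [Finset.prod_mul_distrib]
    congr 1
    exact (Equiv.prod_comp (Tuple.sort g)⁻¹ (fun k => p (f k))).symm
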